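/- arXiv:0811.1771 — 10 statements merged into one kernel-verified Lean document; each statement's English description precedes it below -/
import Mathlib

section
/- Let X be a topological space and let f : X → ℝ be a function. Suppose A ⊆ X is a set such that every point of A is a point of local minimum of f (i.e., each a ∈ A has a neighborhood U with f(a) ≤ f(x) for all x ∈ U), and the restriction of f to A is injective. Then A is a weakly separated subspace of X. -/
/-- A subset `A` of a topological space `X` is weakly separated if each point `a ∈ A`
can be assigned an open neighborhood `O a ⊆ X` such that for any two distinct points
`a, b ∈ A`, either `a ∉ O b` or `b ∉ O a`. -/
def WeaklySeparated {X : Type*} [TopologicalSpace X] (A : Set X) : Prop :=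
  ∃ O : X → Set X, (∀ a ∈ A, IsOpen (O a) ∧ a ∈ O a) ∧
    ∀ a ∈ A, ∀ b ∈ A, a ≠ b → a ∉ O b ∨ b ∉ O a

/-! Give each `a ∈ A` the neighborhood `{x | f a ≤ f x}`. For distinct `a, b ∈ A` the values
`f a`, `f b` differ, and the point with the smaller value lies outside the neighborhood of the
other one. -/

open Topology

section

variable {X : Type*} [TopologicalSpace X]

theorem WeaklySeparated.of_mem_nhds {A : Set X} (N : X → Set X) (hN : ∀ a ∈ A, N a ∈ 𝓝 a)
    (hsep : ∀ a ∈ A, ∀ b ∈ A, a ≠ b → a ∉ N b ∨ b ∉ N a) : WeaklySeparated A :=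
  ⟨fun a ↦ interior (N a),
    fun a ha ↦ ⟨isOpen_interior, mem_interior_iff_mem_nhds.2 (hN a ha)⟩,
    fun a ha b hb hab ↦ (hsep a ha b hb hab).imp
      (mt fun h ↦ interior_subset h) (mt fun h ↦ interior_subset h)⟩

theorem weaklySeparated_of_isLocalMin_of_injOn {β : Type*} [LinearOrder β] {f : X → β}
    {A : Set X} (hmin : ∀ a ∈ A, IsLocalMin f a) (hinj : Set.InjOn f A) :
    WeaklySeparated A := by
  refine WeaklySeparated.of_mem_nhds (fun a ↦ {x | f a ≤ f x}) hmin fun a ha b hb hab ↦ ?_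
  rcases lt_or_gt_of_ne (hinj.ne ha hb hab) with h | h
  · exact Or.inl (not_le.2 h)
  · exact Or.inr (not_le.2 h)

end

theorem stmt_0 {X : Type*} [TopologicalSpace X] (f : X → ℝ) (A : Set X)
    (hmin : ∀ a ∈ A, IsLocalMin f a) (hinj : Set.InjOn f A) :
    WeaklySeparated A :=
  weaklySeparated_of_isLocalMin_of_injOn hmin hinj
end

section
/- Let X be a topological space and let f : X → ℝ be a function. Suppose A ⊆ X is a set such that every point of A is a point of local maximum of f (i.e., each a ∈ A has a neighborhood U with f(x) ≤ f(a) for all x ∈ U), and the restriction of f to A is injective. Then A is a weakly separated subspace of X. -/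
/-! Assign to `a` the interior of the sublevel set `{x | f x ≤ f a}`, an open neighbourhood of `a`
since `a` is a local maximum. For distinct `a, b ∈ A` the values `f a`, `f b` differ, and the
point with the larger value lies outside the neighbourhood of the other. -/

theorem WeaklySeparated.of_isLocalMax_of_injOn {X β : Type*} [TopologicalSpace X] [LinearOrder β]
    {f : X → β} {A : Set X} (hmax : ∀ a ∈ A, IsLocalMax f a) (hinj : Set.InjOn f A) :
    WeaklySeparated A := by
  refine ⟨fun a => interior {x | f x ≤ f a},
    fun a ha => ⟨isOpen_interior, mem_interior_iff_mem_nhds.2 (hmax a ha)⟩, ?_⟩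
  intro a ha b hb hab
  rcases (hinj.ne ha hb hab).lt_or_gt with hlt | hlt
  · exact .inr fun hb' => (interior_subset (s := {x | f x ≤ f a}) hb').not_gt hlt
  · exact .inl fun ha' => (interior_subset (s := {x | f x ≤ f b}) ha').not_gt hlt

theorem stmt_1 {X : Type*} [TopologicalSpace X] (f : X → ℝ) (A : Set X)
    (hmax : ∀ a ∈ A, IsLocalMax f a) (hinj : Set.InjOn f A) :
    WeaklySeparated A :=
  .of_isLocalMax_of_injOn hmax hinj
end

section
/- Let X be a topological space, let κ be an infinite cardinal such that every weakly separated subset of X has cardinality at most κ, and let f : X → ℝ be a locally extremal function. Then the image f(X) has cardinality at most κ. -/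
open Cardinal

/-! Choose one local-minimum point per value of `f`, and give it a neighbourhood on which it is
a minimum. Of two such points, the one with the larger value lies outside the neighbourhood of the
other; so these points form a weakly separated set, which has at most `κ` points. Local maxima are
handled by reversing the order, and `f(X)` is the union of the two sets of values. -/

section

variable {X : Type*} [TopologicalSpace X] {α : Type*} [LinearOrder α]

theorem WeaklySeparated.of_isLocalMin {f : X → α} {S : Set X}
    (hmin : ∀ x ∈ S, IsLocalMin f x) (hinj : S.InjOn f) : WeaklySeparated S := by
  have hnhds : ∀ x ∈ S, ∃ U : Set X, (∀ y ∈ U, f x ≤ f y) ∧ IsOpen U ∧ x ∈ U :=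
    fun x hx ↦ eventually_nhds_iff.1 (hmin x hx)
  choose! O hO_le hO_open hO_mem using hnhds
  refine ⟨O, fun a ha ↦ ⟨hO_open a ha, hO_mem a ha⟩, fun a ha b hb hab ↦ ?_⟩
  rcases lt_trichotomy (f a) (f b) with h | h | h
  · exact .inl fun hab' ↦ (hO_le b hb a hab').not_gt h
  · exact absurd (hinj ha hb h) hab
  · exact .inr fun hba ↦ (hO_le a ha b hba).not_gt h

theorem WeaklySeparated.of_isLocalMax {f : X → α} {S : Set X}
    (hmax : ∀ x ∈ S, IsLocalMax f x) (hinj : S.InjOn f) : WeaklySeparated S :=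
  WeaklySeparated.of_isLocalMin (f := OrderDual.toDual ∘ f) hmax hinj

end

theorem lift_mk_image_le_of_weaklySeparated {X : Type u} [TopologicalSpace X] {β : Type v}
    {κ : Cardinal.{u}} (hws : ∀ A : Set X, WeaklySeparated A → #A ≤ κ) {f : X → β} {S : Set X}
    (hS : ∀ T ⊆ S, T.InjOn f → WeaklySeparated T) :
    lift.{u} #(f '' S) ≤ lift.{v} κ := by
  obtain ⟨T, hTS, hT⟩ := S.exists_subset_bijOn f
  rw [← hT.image_eq, mk_image_eq_of_injOn_lift f T hT.injOn, lift_le]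
  exact hws T (hS T hTS hT.injOn)

theorem stmt_3 {X : Type u} [TopologicalSpace X] (κ : Cardinal.{u}) (hκ : ℵ₀ ≤ κ)
    (hws : ∀ A : Set X, WeaklySeparated A → #A ≤ κ)
    (f : X → ℝ) (hf : ∀ x : X, IsLocalMin f x ∨ IsLocalMax f x) :
    Cardinal.lift.{u} #(Set.range f) ≤ κ := by
  have hrange : Set.range f = f '' {x | IsLocalMin f x} ∪ f '' {x | IsLocalMax f x} := by
    have hcover : {x | IsLocalMin f x} ∪ {x | IsLocalMax f x} = Set.univ :=
      Set.eq_univ_of_forall hf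
    rw [← Set.image_union, hcover, Set.image_univ]
  have hmin : lift.{u} #(f '' {x | IsLocalMin f x}) ≤ κ := by
    simpa only [lift_uzero] using lift_mk_image_le_of_weaklySeparated (S := {x | IsLocalMin f x}) hws
      fun T hT hinj ↦ WeaklySeparated.of_isLocalMin (fun x hx ↦ hT hx) hinj
  have hmax : lift.{u} #(f '' {x | IsLocalMax f x}) ≤ κ := by
    simpa only [lift_uzero] using lift_mk_image_le_of_weaklySeparated (S := {x | IsLocalMax f x}) hws
      fun T hT hinj ↦ WeaklySeparated.of_isLocalMax (fun x hx ↦ hT hx) hinj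
  calc lift.{u} #(Set.range f)
      ≤ lift.{u} #(f '' {x | IsLocalMin f x}) + lift.{u} #(f '' {x | IsLocalMax f x}) := by
        rw [hrange, ← lift_add, lift_le]
        exact mk_union_le _ _
    _ ≤ κ := add_le_of_le hκ hmin hmax
end

section
/- Let X be a topological space and let f : X → ℝ be a continuous locally extremal function. Then the cardinality of the image f(X) is at most R(X), the weak separate number of X (Theorem 1 of the paper). -/
open Cardinal

/-- The weak separate number `R(X)`: the supremum of the cardinalities of the
weakly separated subsets of `X`. -/
noncomputable def weakSeparateNumber (X : Type u) [TopologicalSpace X] : Cardinal.{u} :=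
  ⨆ A : {A : Set X // WeaklySeparated A}, #(A : Set X)

/-- Theorem 1: for a continuous locally extremal `f : X → ℝ`, `|f(X)| ≤ R(X)`. -/
theorem stmt_4 {X : Type u} [TopologicalSpace X] (f : X → ℝ) (hcont : Continuous f)
    (hf : ∀ x : X, IsLocalMin f x ∨ IsLocalMax f x) :
    Cardinal.lift.{u} #(Set.range f) ≤ weakSeparateNumber X := by
  classical
  rcases isEmpty_or_nonempty X with hX | hX
  · have hre : Set.range f = ∅ := Set.range_eq_empty f
    rw [hre]
    simp
  inhabit X
  set Y : Set ℝ := Set.range f with hY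
  -- the supremum is well defined (bounded above by #X)
  have hb : BddAbove (Set.range fun (A : {A : Set X // WeaklySeparated A}) =>
      #((A : Set X) : Set X)) := by
    refine ⟨#X, ?_⟩
    rintro c ⟨W, rfl⟩
    exact Cardinal.mk_set_le _
  -- key lemma : a pointwise selection with pairwise one-sided exclusion gives a bound
  have key : ∀ (S : Set ℝ) (q : ℝ → X) (V : ℝ → Set X),
      (∀ r ∈ S, f (q r) = r) →
      (∀ r ∈ S, IsOpen (V r) ∧ q r ∈ V r) →
      (∀ r ∈ S, ∀ r' ∈ S, r ≠ r' → q r ∉ V r' ∨ q r' ∉ V r) →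
      Cardinal.lift.{u} #S ≤ weakSeparateNumber X := by
    intro S q V hq hV hsep
    have hWS : WeaklySeparated (q '' S) := by
      refine ⟨fun a => V (f a), ?_, ?_⟩
      · rintro a ⟨r, hr, rfl⟩
        dsimp only
        rw [hq r hr]; exact hV r hr
      · rintro a ⟨r, hr, rfl⟩ b ⟨r', hr', rfl⟩ hne
        have hrr : r ≠ r' := by rintro rfl; exact hne rfl
        dsimp only
        rw [hq r hr, hq r' hr']
        exact hsep r hr r' hr' hrr
    have hinj : Nonempty (↥S ↪ ↥(q '' S)) := by
      refine ⟨⟨fun r => ⟨q r, ⟨r, r.2, rfl⟩⟩, ?_⟩⟩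
      intro a b hab
      apply Subtype.ext
      have hqq : q (a : ℝ) = q (b : ℝ) := congrArg Subtype.val hab
      have : f (q (a : ℝ)) = f (q (b : ℝ)) := by rw [hqq]
      rwa [hq a a.2, hq b b.2] at this
    have h1 : Cardinal.lift.{u} #S ≤ Cardinal.lift.{0} #(q '' S) :=
      Cardinal.lift_mk_le'.mpr hinj
    rw [Cardinal.lift_uzero] at h1
    refine h1.trans ?_
    exact le_ciSup hb ⟨q '' S, hWS⟩
  -- classification of values
  let maxV : ℝ → Prop := fun r => ∃ x, f x = r ∧ IsLocalMax f x
  have hsel : ∀ r ∈ Y, ∃ x : X, ∃ U : Set X, f x = r ∧ IsOpen U ∧ x ∈ U ∧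
      ((maxV r ∧ ∀ y ∈ U, f y ≤ r) ∨ (¬ maxV r ∧ ∀ y ∈ U, r ≤ f y)) := by
    intro r hr
    by_cases hmv : maxV r
    · obtain ⟨x, hx, hmax⟩ := hmv
      have hev : ∀ᶠ y in nhds x, f y ≤ f x := hmax
      obtain ⟨U, hU1, hU2, hU3⟩ := eventually_nhds_iff.mp hev
      refine ⟨x, U, hx, hU2, hU3, Or.inl ⟨⟨x, hx, hmax⟩, fun y hy => ?_⟩⟩
      rw [← hx]; exact hU1 y hy
    · obtain ⟨x, hx⟩ := hr
      have hmin : IsLocalMin f x := by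
        rcases hf x with h | h
        · exact h
        · exact absurd ⟨x, hx, h⟩ hmv
      have hev : ∀ᶠ y in nhds x, f x ≤ f y := hmin
      obtain ⟨U, hU1, hU2, hU3⟩ := eventually_nhds_iff.mp hev
      refine ⟨x, U, hx, hU2, hU3, Or.inr ⟨hmv, fun y hy => ?_⟩⟩
      rw [← hx]; exact hU1 y hy
  choose! p U hfp hop hmem hbd using hsel
  let MTs : Set ℝ := {r | r ∈ Y ∧ maxV r}
  let mTs : Set ℝ := {r | r ∈ Y ∧ ¬ maxV r}
  rcases Set.finite_or_infinite Y with hfin | hinf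
  · -- finite range : a single weakly separated family, with cuts
    have hsfin : ∀ r : ℝ, (MTs ∩ Set.Ioi r).Finite := fun r =>
      hfin.subset (fun z hz => hz.1.1)
    let s : ℝ → ℝ := fun r =>
      if h : (MTs ∩ Set.Ioi r).Nonempty then sInf (MTs ∩ Set.Ioi r) else r + 1
    have hs1 : ∀ r : ℝ, r < s r := by
      intro r
      by_cases h : (MTs ∩ Set.Ioi r).Nonempty
      · have hmem' : sInf (MTs ∩ Set.Ioi r) ∈ MTs ∩ Set.Ioi r := h.csInf_mem (hsfin r)
        show r < if h' : (MTs ∩ Set.Ioi r).Nonempty then sInf (MTs ∩ Set.Ioi r) else r + 1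
        rw [dif_pos h]
        exact hmem'.2
      · show r < if h' : (MTs ∩ Set.Ioi r).Nonempty then sInf (MTs ∩ Set.Ioi r) else r + 1
        rw [dif_neg h]
        linarith
    have hs2 : ∀ r z : ℝ, z ∈ MTs → r < z → s r ≤ z := by
      intro r z hz hrz
      have hne : (MTs ∩ Set.Ioi r).Nonempty := ⟨z, hz, hrz⟩
      show (if h' : (MTs ∩ Set.Ioi r).Nonempty then sInf (MTs ∩ Set.Ioi r) else r + 1) ≤ z
      rw [dif_pos hne]
      exact csInf_le (hsfin r).bddBelow ⟨hz, hrz⟩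
    refine key Y p (fun r => if maxV r then U r else U r ∩ f ⁻¹' Set.Iio (s r)) hfp ?_ ?_
    · intro r hr
      by_cases hmv : maxV r
      · simp only [if_pos hmv]
        exact ⟨hop r hr, hmem r hr⟩
      · simp only [if_neg hmv]
        refine ⟨(hop r hr).inter (isOpen_Iio.preimage hcont), hmem r hr, ?_⟩
        show f (p r) ∈ Set.Iio (s r)
        rw [hfp r hr]
        exact hs1 r
    · have aux : ∀ r ∈ Y, ∀ r' ∈ Y, r < r' →
          p r ∉ (if maxV r' then U r' else U r' ∩ f ⁻¹' Set.Iio (s r')) ∨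
          p r' ∉ (if maxV r then U r else U r ∩ f ⁻¹' Set.Iio (s r)) := by
        intro r hr r' hr' hlt
        by_cases hmv : maxV r
        · right
          rw [if_pos hmv]
          intro hmemU
          have hB := ((hbd r hr).resolve_right (fun h => h.1 hmv)).2 (p r') hmemU
          rw [hfp r' hr'] at hB
          linarith
        · by_cases hmv' : maxV r'
          · right
            rw [if_neg hmv]
            rintro ⟨-, hlt2⟩
            have h2 : f (p r') < s r := hlt2
            rw [hfp r' hr'] at h2
            have h3 := hs2 r r' ⟨hr', hmv'⟩ hlt
            linarith
          · left
            rw [if_neg hmv']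
            rintro ⟨hmemU, -⟩
            have hB := ((hbd r' hr').resolve_left (fun h => hmv' h.1)).2 (p r) hmemU
            rw [hfp r hr] at hB
            linarith
      intro r hr r' hr' hne
      rcases hne.lt_or_gt with h | h
      · exact aux r hr r' hr' h
      · exact (aux r' hr' r hr h).symm
  · -- infinite range : two weakly separated families
    have hsub : Y ⊆ MTs ∪ mTs := by
      intro r hr
      by_cases hmv : maxV r
      · exact Or.inl ⟨hr, hmv⟩
      · exact Or.inr ⟨hr, hmv⟩
    have hMT : Cardinal.lift.{u} #MTs ≤ weakSeparateNumber X := by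
      refine key MTs p U (fun r hr => hfp r hr.1) (fun r hr => ⟨hop r hr.1, hmem r hr.1⟩) ?_
      have aux : ∀ r ∈ MTs, ∀ r' ∈ MTs, r < r' → p r ∉ U r' ∨ p r' ∉ U r := by
        intro r hr r' hr' hlt
        right
        intro hmemU
        have hB := ((hbd r hr.1).resolve_right (fun h => h.1 hr.2)).2 (p r') hmemU
        rw [hfp r' hr'.1] at hB
        linarith
      intro r hr r' hr' hne
      rcases hne.lt_or_gt with h | h
      · exact aux r hr r' hr' h
      · exact (aux r' hr' r hr h).symm
    have hmT : Cardinal.lift.{u} #mTs ≤ weakSeparateNumber X := by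
      refine key mTs p U (fun r hr => hfp r hr.1) (fun r hr => ⟨hop r hr.1, hmem r hr.1⟩) ?_
      have aux : ∀ r ∈ mTs, ∀ r' ∈ mTs, r < r' → p r ∉ U r' ∨ p r' ∉ U r := by
        intro r hr r' hr' hlt
        left
        intro hmemU
        have hB := ((hbd r' hr'.1).resolve_left (fun h => hr'.2 h.1)).2 (p r) hmemU
        rw [hfp r hr.1] at hB
        linarith
      intro r hr r' hr' hne
      rcases hne.lt_or_gt with h | h
      · exact aux r hr r' hr' h
      · exact (aux r' hr' r hr h).symm
    have hRinf : ℵ₀ ≤ weakSeparateNumber X := by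
      have hUn : (MTs ∪ mTs).Infinite := hinf.mono hsub
      rcases Set.infinite_union.mp hUn with h | h
      · have hI : Infinite ↥MTs := h.to_subtype
        calc (ℵ₀ : Cardinal.{u}) = Cardinal.lift.{u} (ℵ₀ : Cardinal.{0}) := by
              rw [Cardinal.lift_aleph0]
          _ ≤ Cardinal.lift.{u} #MTs := Cardinal.lift_le.mpr (Cardinal.aleph0_le_mk _)
          _ ≤ _ := hMT
      · have hI : Infinite ↥mTs := h.to_subtype
        calc (ℵ₀ : Cardinal.{u}) = Cardinal.lift.{u} (ℵ₀ : Cardinal.{0}) := by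
              rw [Cardinal.lift_aleph0]
          _ ≤ Cardinal.lift.{u} #mTs := Cardinal.lift_le.mpr (Cardinal.aleph0_le_mk _)
          _ ≤ _ := hmT
    calc Cardinal.lift.{u} #Y
        ≤ Cardinal.lift.{u} #(MTs ∪ mTs : Set ℝ) :=
          Cardinal.lift_le.mpr (Cardinal.mk_le_mk_of_subset hsub)
      _ ≤ Cardinal.lift.{u} (#MTs + #mTs) :=
          Cardinal.lift_le.mpr (Cardinal.mk_union_le _ _)
      _ = Cardinal.lift.{u} #MTs + Cardinal.lift.{u} #mTs := Cardinal.lift_add _ _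
      _ ≤ weakSeparateNumber X + weakSeparateNumber X := add_le_add hMT hmT
      _ = weakSeparateNumber X := Cardinal.add_eq_self hRinf
end

section
/- Let X be a connected topological space whose weak separate number satisfies R(X) < 𝔠 (i.e., every weakly separated subset of X has cardinality less than the cardinality of the continuum, and this supremum is < 𝔠). Then every continuous locally extremal function f : X → ℝ is constant (Corollary 1 of the paper). -/
open Cardinal

/-!
Every value of a locally extremal function is attained at a local minimum or at a local maximum.
Choosing one local minimum for each value attained at local minima gives a weakly separated set:
with `O a` the interior of `{y | f a ≤ f y}`, two points lying in each other's neighbourhoods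
have equal values. So the range of `f` is covered by two sets of size at most `R(X) < 𝔠`, while
the range of a nonconstant continuous real function on a connected space contains a
nondegenerate interval, which has `𝔠` points.
-/

open Set

theorem WeaklySeparated.mk_le_weakSeparateNumber {X : Type u} [TopologicalSpace X] {A : Set X}
    (hA : WeaklySeparated A) : #A ≤ weakSeparateNumber X :=
  le_ciSup bddAbove_of_small (⟨A, hA⟩ : {A : Set X // WeaklySeparated A})

section LocalMin

variable {X : Type u} {α : Type v} [TopologicalSpace X] [PartialOrder α] {f : X → α}

theorem weaklySeparated_of_injOn_isLocalMin {A : Set X} (hmin : ∀ a ∈ A, IsLocalMin f a)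
    (hinj : InjOn f A) : WeaklySeparated A := by
  refine ⟨fun a ↦ interior {y | f a ≤ f y}, fun a ha ↦ ⟨isOpen_interior, ?_⟩, ?_⟩
  · exact mem_interior_iff_mem_nhds.2 (hmin a ha)
  · intro a ha b hb hne
    by_contra! h
    have hba : a ∈ {y | f b ≤ f y} := interior_subset h.1
    have hab : b ∈ {y | f a ≤ f y} := interior_subset h.2
    exact hne (hinj ha hb (le_antisymm hab hba))

theorem lift_mk_image_le_weakSeparateNumber {P : Set X} (hmin : ∀ x ∈ P, IsLocalMin f x) :
    lift.{u} #(f '' P) ≤ lift.{v} (weakSeparateNumber X) := by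
  obtain ⟨A, hAP, hbij⟩ := exists_subset_bijOn P f
  have hA : WeaklySeparated A :=
    weaklySeparated_of_injOn_isLocalMin (fun a ha ↦ hmin a (hAP ha)) hbij.injOn
  rw [← hbij.image_eq, mk_image_eq_of_injOn_lift f A hbij.injOn]
  exact lift_le.2 hA.mk_le_weakSeparateNumber

theorem lift_mk_range_le_weakSeparateNumber_add
    (hf : ∀ x, IsLocalMin f x ∨ IsLocalMax f x) :
    lift.{u} #(range f) ≤ lift.{v} (weakSeparateNumber X) + lift.{v} (weakSeparateNumber X) := by
  have hcover : range f ⊆ f '' {x | IsLocalMin f x} ∪ f '' {x | IsLocalMax f x} := by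
    rintro _ ⟨x, rfl⟩
    exact (hf x).imp (mem_image_of_mem f) (mem_image_of_mem f)
  have hmax : lift.{u} #(f '' {x | IsLocalMax f x}) ≤ lift.{v} (weakSeparateNumber X) :=
    lift_mk_image_le_weakSeparateNumber (f := OrderDual.toDual ∘ f)
      fun _ hx ↦ isMinFilter_dual_iff.2 hx
  calc lift.{u} #(range f)
      ≤ lift.{u} #(f '' {x | IsLocalMin f x} ∪ f '' {x | IsLocalMax f x} : Set α) :=
        lift_le.2 (mk_le_mk_of_subset hcover)
    _ ≤ lift.{u} #(f '' {x | IsLocalMin f x}) + lift.{u} #(f '' {x | IsLocalMax f x}) :=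
        (lift_le.2 (mk_union_le _ _)).trans_eq (lift_add _ _)
    _ ≤ _ := add_le_add (lift_mk_image_le_weakSeparateNumber fun _ hx ↦ hx) hmax

end LocalMin

theorem continuum_le_lift_mk_range {X : Type u} [TopologicalSpace X] [PreconnectedSpace X]
    {f : X → ℝ} (hf : Continuous f) {x y : X} (hxy : f x < f y) : 𝔠 ≤ lift.{u} #(range f) := by
  have hIcc : Icc (f x) (f y) ⊆ range f :=
    (isPreconnected_range hf).ordConnected.out (mem_range_self x) (mem_range_self y)
  calc 𝔠 = lift.{u} #(Icc (f x) (f y)) := by rw [mk_Icc_real hxy, lift_continuum]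
    _ ≤ lift.{u} #(range f) := lift_le.2 (mk_le_mk_of_subset hIcc)

/-- Corollary 1: a continuous locally extremal function on a connected space `X`
with `R(X) < 𝔠` is constant. -/
theorem stmt_5 {X : Type u} [TopologicalSpace X] [ConnectedSpace X]
    (hR : weakSeparateNumber X < Cardinal.continuum)
    (f : X → ℝ) (hcont : Continuous f)
    (hf : ∀ x : X, IsLocalMin f x ∨ IsLocalMax f x) :
    ∀ x y : X, f x = f y := by
  have hrange : lift.{u} #(range f) < 𝔠 := by
    refine (lift_mk_range_le_weakSeparateNumber_add hf).trans_lt ?_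
    rw [lift_uzero]
    exact add_lt_of_lt aleph0_le_continuum hR hR
  have hnot_lt (x y : X) : ¬ f x < f y := fun hxy ↦
    (continuum_le_lift_mk_range hcont hxy).not_gt hrange
  exact fun x y ↦ le_antisymm (not_lt.1 (hnot_lt y x)) (not_lt.1 (hnot_lt x y))
end

section
/- Every continuous locally extremal function f : X → ℝ on a connected separable metric space X is constant. -/
/-!
A locally extremal function on a second-countable space has countable range: the value at `x`
is the least or the greatest value of `f` on any basic open set around `x` inside a neighbourhood
where `x` is extremal, and each of the countably many basic sets has at most one least and one
greatest value. If `f` is also continuous and `X` connected, the range is a countable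
preconnected subset of `ℝ`, hence a single point.
-/

open Set TopologicalSpace

theorem Set.countable_range_of_isLocalMin_or_isLocalMax {X Y : Type*} [TopologicalSpace X]
    [SecondCountableTopology X] [PartialOrder Y] {f : X → Y}
    (hf : ∀ x, IsLocalMin f x ∨ IsLocalMax f x) : (range f).Countable := by
  let extremeValues (B : Set X) : Set Y := {a | IsLeast (f '' B) a} ∪ {a | IsGreatest (f '' B) a}
  have hcount : (⋃ B ∈ countableBasis X, extremeValues B).Countable :=
    (countable_countableBasis X).biUnion fun B _ =>
      (Subsingleton.countable fun _ ha _ hb => IsLeast.unique ha hb).union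
        (Subsingleton.countable fun _ ha _ hb => IsGreatest.unique ha hb)
  refine hcount.mono ?_
  rintro _ ⟨x, rfl⟩
  rcases hf x with hmin | hmax
  · obtain ⟨B, hB, hxB, hBU⟩ := (isBasis_countableBasis X).mem_nhds_iff.1 hmin
    exact mem_biUnion hB (Or.inl ⟨mem_image_of_mem f hxB, forall_mem_image.2 fun y hy => hBU hy⟩)
  · obtain ⟨B, hB, hxB, hBU⟩ := (isBasis_countableBasis X).mem_nhds_iff.1 hmax
    exact mem_biUnion hB (Or.inr ⟨mem_image_of_mem f hxB, forall_mem_image.2 fun y hy => hBU hy⟩)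

/-- Every continuous locally extremal function on a connected separable metric space
is constant. -/
theorem stmt_6 {X : Type*} [MetricSpace X] [TopologicalSpace.SeparableSpace X]
    [ConnectedSpace X] (f : X → ℝ) (hcont : Continuous f)
    (hf : ∀ x : X, IsLocalMin f x ∨ IsLocalMax f x) :
    ∀ x y : X, f x = f y := by
  have hrange : (range f).Subsingleton :=
    (countable_range_of_isLocalMin_or_isLocalMax hf).isTotallyDisconnected _ subset_rfl
      (isPreconnected_range hcont)
  exact fun x y => hrange (mem_range_self x) (mem_range_self y)
end

section
/- Let X be a topological space and let N be a network for X. Then every weakly separated subset A of X has cardinality at most the cardinality of N (Tkachenko's inequality R(X) ≤ nw(X)). -/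
/-! Choose for each `a ∈ A` a network element `n a` with `a ∈ n a ⊆ O a`. If distinct `a, b`
chose the same element, then `a ∈ O b` and `b ∈ O a`, against weak separation; so `a ↦ n a`
injects `A` into the network. -/

open Cardinal

/-- A network for a topological space `X` is a family `N` of subsets of `X` such that
for every `x ∈ X` and every open `U ∋ x` there is `n ∈ N` with `x ∈ n ⊆ U`. -/
def IsNetwork {X : Type*} [TopologicalSpace X] (N : Set (Set X)) : Prop :=
  ∀ x : X, ∀ U : Set X, IsOpen U → x ∈ U → ∃ n ∈ N, x ∈ n ∧ n ⊆ U

theorem injective_of_mem_subset_of_separated {X : Type*} {A : Set X} {O : X → Set X}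
    (hsep : ∀ a ∈ A, ∀ b ∈ A, a ≠ b → a ∉ O b ∨ b ∉ O a) {n : A → Set X}
    (hmem : ∀ a, ↑a ∈ n a) (hsub : ∀ a, n a ⊆ O a) : Function.Injective n := by
  intro a b hab
  by_contra hne
  rcases hsep a a.2 b b.2 (Subtype.coe_ne_coe.mpr hne) with h | h
  · exact h (hsub b (hab ▸ hmem a))
  · exact h (hsub a (hab ▸ hmem b))

/-- Tkachenko's inequality `R(X) ≤ nw(X)`: any weakly separated subset has cardinality
at most that of any network. -/
theorem stmt_8 {X : Type u} [TopologicalSpace X] (N : Set (Set X)) (hN : IsNetwork N)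
    (A : Set X) (hA : WeaklySeparated A) : #A ≤ #N := by
  obtain ⟨O, hO, hsep⟩ := hA
  choose n hnN hmem hsub using fun a : A => hN a (O a) (hO a a.2).1 (hO a a.2).2
  have hinj : Function.Injective n := injective_of_mem_subset_of_separated hsep hmem hsub
  exact mk_le_of_injective (f := fun a => (⟨n a, hnN a⟩ : N))
    fun a b hab => hinj (congrArg Subtype.val hab)
end

section
/- Equip the lexicographic square [0,1] ×ₗ [0,1] (the product of the unit interval with itself, ordered lexicographically and carrying the order topology) with its order topology. Then the first-coordinate projection f : [0,1] ×ₗ [0,1] → [0,1], f(x,y) = x, is continuous, non-constant, and locally extremal: every point of the lexicographic square is a point of local minimum or a point of local maximum of f. -/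
/-! The projection `(a, b) ↦ a` is constant on each vertical fibre `{a} × β`. A point `(a, b)`
with `b` not minimal has the neighbourhood `Ioi (a, c)` (for some `c < b`) on which the
projection is at least `a`, so it is a local minimum; dually, `b` not maximal gives a local
maximum, and in a nontrivial `β` no `b` is both minimal and maximal. -/

open Set

/-- The lexicographic square: `[0,1] ×ₗ [0,1]` with the order topology of the
lexicographic order. -/
noncomputable instance lexSquareTopology :
    TopologicalSpace (Icc (0:ℝ) 1 ×ₗ Icc (0:ℝ) 1) :=
  Preorder.topology _

instance lexSquareOrderTopology : OrderTopology (Icc (0:ℝ) 1 ×ₗ Icc (0:ℝ) 1) :=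
  ⟨rfl⟩

namespace Prod.Lex

variable {α β : Type*} [LinearOrder α] [LinearOrder β]

lemma preimage_fst_ofLex_Ioi [OrderTop β] (a : α) :
    (fun p : α ×ₗ β => (ofLex p).1) ⁻¹' Ioi a = Ioi (toLex (a, ⊤)) := by
  ext p
  simp only [mem_preimage, mem_Ioi, lt_iff, ofLex_toLex, not_top_lt, and_false, or_false]

lemma preimage_fst_ofLex_Iio [OrderBot β] (a : α) :
    (fun p : α ×ₗ β => (ofLex p).1) ⁻¹' Iio a = Iio (toLex (a, ⊥)) := by
  ext p
  simp only [mem_preimage, mem_Iio, lt_iff, ofLex_toLex, not_lt_bot, and_false, or_false]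

variable [TopologicalSpace (α ×ₗ β)] [OrderTopology (α ×ₗ β)]

theorem continuous_fst_ofLex [TopologicalSpace α] [OrderTopology α] [BoundedOrder β] :
    Continuous fun p : α ×ₗ β => (ofLex p).1 :=
  OrderTopology.continuous_iff.2 fun a => by
    rw [preimage_fst_ofLex_Ioi, preimage_fst_ofLex_Iio]
    exact ⟨isOpen_Ioi, isOpen_Iio⟩

theorem isLocalMin_fst_ofLex {p : α ×ₗ β} (hp : ¬ IsMin (ofLex p).2) :
    IsLocalMin (fun p : α ×ₗ β => (ofLex p).1) p := by
  obtain ⟨c, hc⟩ := not_isMin_iff.1 hp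
  have hmem : p ∈ Ioi (toLex ((ofLex p).1, c)) := lt_iff.2 (Or.inr ⟨rfl, hc⟩)
  filter_upwards [isOpen_Ioi.mem_nhds hmem] with q hq
  exact monotone_fst (toLex ((ofLex p).1, c)) q hq.le

theorem isLocalMax_fst_ofLex {p : α ×ₗ β} (hp : ¬ IsMax (ofLex p).2) :
    IsLocalMax (fun p : α ×ₗ β => (ofLex p).1) p := by
  obtain ⟨c, hc⟩ := not_isMax_iff.1 hp
  have hmem : p ∈ Iio (toLex ((ofLex p).1, c)) := lt_iff.2 (Or.inr ⟨rfl, hc⟩)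
  filter_upwards [isOpen_Iio.mem_nhds hmem] with q hq
  exact monotone_fst q (toLex ((ofLex p).1, c)) hq.le

theorem isLocalMin_or_isLocalMax_fst_ofLex [Nontrivial β] (p : α ×ₗ β) :
    IsLocalMin (fun p : α ×ₗ β => (ofLex p).1) p ∨
      IsLocalMax (fun p : α ×ₗ β => (ofLex p).1) p := by
  by_cases hmin : IsMin (ofLex p).2
  · exact Or.inr (isLocalMax_fst_ofLex hmin.not_isMax')
  · exact Or.inl (isLocalMin_fst_ofLex hmin)

end Prod.Lex

/-- The first-coordinate projection of the lexicographic square is continuous,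
non-constant, and locally extremal. -/
theorem stmt_10 :
    Continuous (fun p : Icc (0:ℝ) 1 ×ₗ Icc (0:ℝ) 1 => ((ofLex p).1 : ℝ)) ∧
    (¬ ∀ p q : Icc (0:ℝ) 1 ×ₗ Icc (0:ℝ) 1, ((ofLex p).1 : ℝ) = ((ofLex q).1 : ℝ)) ∧
    (∀ p : Icc (0:ℝ) 1 ×ₗ Icc (0:ℝ) 1,
      IsLocalMin (fun p : Icc (0:ℝ) 1 ×ₗ Icc (0:ℝ) 1 => ((ofLex p).1 : ℝ)) p ∨
      IsLocalMax (fun p : Icc (0:ℝ) 1 ×ₗ Icc (0:ℝ) 1 => ((ofLex p).1 : ℝ)) p) := by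
  refine ⟨continuous_subtype_val.comp Prod.Lex.continuous_fst_ofLex, fun hconst => ?_,
    fun p => ?_⟩
  · have h01 := hconst (toLex (⊥, ⊥)) (toLex (⊤, ⊥))
    norm_num at h01
  · exact (Prod.Lex.isLocalMin_or_isLocalMax_fst_ofLex p).imp
      (·.comp_mono (Subtype.mono_coe _)) (·.comp_mono (Subtype.mono_coe _))
end

section
/- Let X be a connected topological space admitting a continuous locally extremal function f : X → ℝ that is not constant. Then X contains, for every cardinal κ < 𝔠, a weakly separated subset of cardinality greater than κ; equivalently, the weak separate number satisfies R(X) ≥ 𝔠. -/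
open Cardinal

/-! The local extremum points of a non-constant continuous function on a connected space
take continuum many values, so one family of them (minima, say) takes more than `κ < 𝔠`
values. Points of local minimum with pairwise distinct values are weakly separated by their
minimizing neighborhoods: if `f a < f b`, then `a` cannot lie in a neighborhood of `b` on
which `f ≥ f b`. -/

open Set Filter Topology

section WeaklySeparated

variable {X β : Type*} [TopologicalSpace X] [LinearOrder β] {f : X → β} {A : Set X}

theorem WeaklySeparated.of_injOn_of_isLocalMin (hinj : InjOn f A)
    (hmin : ∀ a ∈ A, IsLocalMin f a) : WeaklySeparated A := by
  have hnhds : ∀ a, ∃ U : Set X, (a ∈ A → ∀ y ∈ U, f a ≤ f y) ∧ IsOpen U ∧ a ∈ U := by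
    intro a
    by_cases ha : a ∈ A
    · obtain ⟨U, hU, hUo, haU⟩ := eventually_nhds_iff.mp (hmin a ha)
      exact ⟨U, fun _ ↦ hU, hUo, haU⟩
    · exact ⟨univ, fun h ↦ (ha h).elim, isOpen_univ, mem_univ a⟩
  choose O hOmin hOopen hmemO using hnhds
  refine ⟨O, fun a _ ↦ ⟨hOopen a, hmemO a⟩, fun a ha b hb hab ↦ ?_⟩
  rcases (hinj.ne ha hb hab).lt_or_gt with hlt | hlt
  · exact .inl fun haOb ↦ (hOmin b hb a haOb).not_gt hlt
  · exact .inr fun hbOa ↦ (hOmin a ha b hbOa).not_gt hlt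

theorem WeaklySeparated.of_injOn_of_isLocalMax (hinj : InjOn f A)
    (hmax : ∀ a ∈ A, IsLocalMax f a) : WeaklySeparated A :=
  of_injOn_of_isLocalMin (f := OrderDual.toDual ∘ f) (OrderDual.toDual.injective.comp_injOn hinj)
    fun a ha ↦ (hmax a ha).dual

end WeaklySeparated

theorem IsPreconnected.continuum_le_mk {s : Set ℝ} (hs : IsPreconnected s)
    (hs' : s.Nontrivial) : 𝔠 ≤ #s := by
  obtain ⟨a, ha, b, hb, hab⟩ := hs'.exists_lt
  calc 𝔠 = #(Icc a b) := (mk_Icc_real hab).symm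
    _ ≤ #s := mk_le_mk_of_subset (hs.ordConnected.out ha hb)

theorem exists_injOn_continuum_le_mk {X : Type u} [TopologicalSpace X] [PreconnectedSpace X]
    {f : X → ℝ} (hf : Continuous f) (hnc : (range f).Nontrivial) :
    ∃ T : Set X, InjOn f T ∧ 𝔠 ≤ #T := by
  obtain ⟨T, hTimg, hTinj⟩ := exists_image_eq_and_injOn univ f
  refine ⟨T, hTinj, ?_⟩
  have hrange : 𝔠 ≤ #(f '' T) := by
    rw [hTimg, image_univ]
    exact (isPreconnected_range hf).continuum_le_mk hnc
  have hlift := lift_le.{u}.mpr hrange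
  rwa [lift_continuum, mk_image_eq_of_injOn_lift f T hTinj, lift_uzero] at hlift

theorem Cardinal.lt_mk_or_lt_mk_of_lt_mk_union {α : Type*} {s t : Set α} {κ : Cardinal}
    (hinf : ℵ₀ ≤ #(s ∪ t : Set α)) (hκ : κ < #(s ∪ t : Set α)) : κ < #s ∨ κ < #t := by
  by_contra! h
  exact (mk_union_le s t).not_gt
    (add_lt_of_lt hinf (h.1.trans_lt hκ) (h.2.trans_lt hκ))

/-- If a connected space admits a continuous non-constant locally extremal real
function, then for every cardinal `κ < 𝔠` it has a weakly separated subset of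
cardinality `> κ`; i.e. `R(X) ≥ 𝔠`. -/
theorem stmt_14 {X : Type u} [TopologicalSpace X] [ConnectedSpace X]
    (f : X → ℝ) (hcont : Continuous f)
    (hf : ∀ x : X, IsLocalMin f x ∨ IsLocalMax f x)
    (hnc : ¬ ∀ x y : X, f x = f y) :
    ∀ κ : Cardinal.{u}, κ < Cardinal.continuum →
      ∃ A : Set X, WeaklySeparated A ∧ κ < #A := by
  intro κ hκ
  have hrange : (range f).Nontrivial := by
    push Not at hnc
    obtain ⟨x, y, hxy⟩ := hnc
    exact ⟨f x, mem_range_self x, f y, mem_range_self y, hxy⟩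
  obtain ⟨T, hinj, hT⟩ := exists_injOn_continuum_le_mk hcont hrange
  have hsplit : T = {x ∈ T | IsLocalMin f x} ∪ {x ∈ T | IsLocalMax f x} := by
    rw [← sep_or, sep_eq_self_iff_mem_true.mpr fun x _ ↦ hf x]
  rw [hsplit] at hT
  rcases lt_mk_or_lt_mk_of_lt_mk_union (aleph0_le_continuum.trans hT) (hκ.trans_le hT)
    with hmin | hmax
  · exact ⟨_, .of_injOn_of_isLocalMin (hinj.mono (sep_subset _ _)) fun _ ha ↦ ha.2, hmin⟩
  · exact ⟨_, .of_injOn_of_isLocalMax (hinj.mono (sep_subset _ _)) fun _ ha ↦ ha.2, hmax⟩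
end

section
/- Let X be a connected topological space admitting a continuous locally extremal function f : X → ℝ that is not constant. Then every network for X has cardinality at least 𝔠; in particular the network weight satisfies nw(X) ≥ 𝔠. -/
open Cardinal

/-!
Each value `f x` of a locally extremal function is the least or the greatest value of `f` on
some member of the network lying in a neighbourhood where `x` is extremal. A set has at most
one least and one greatest value, so `f` takes at most `2 · #N` values. A continuous
non-constant function on a connected space takes a whole nondegenerate interval of values,
hence `𝔠 ≤ 2 · #N`, and `#N` must be infinite, so `2 · #N = #N`.
-/

section LocallyExtremal

universe v w

variable {X : Type v} {α : Type w} [TopologicalSpace X] {f : X → α} {N : Set (Set X)}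

theorem IsNetwork.exists_isLeast_or_isGreatest [Preorder α] (hN : IsNetwork N)
    (hf : ∀ x, IsLocalMin f x ∨ IsLocalMax f x) (x : X) :
    ∃ n ∈ N, IsLeast (f '' n) (f x) ∨ IsGreatest (f '' n) (f x) := by
  have extremal_on {p : α → α → Prop} (h : ∀ᶠ y in nhds x, p (f x) (f y)) :
      ∃ n ∈ N, f x ∈ f '' n ∧ ∀ y ∈ n, p (f x) (f y) := by
    obtain ⟨U, hU, hUo, hxU⟩ := eventually_nhds_iff.mp h
    obtain ⟨n, hnN, hxn, hnU⟩ := hN x U hUo hxU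
    exact ⟨n, hnN, Set.mem_image_of_mem f hxn, fun y hy => hU y (hnU hy)⟩
  rcases hf x with hmin | hmax
  · obtain ⟨n, hnN, hx, hle⟩ := extremal_on (p := (· ≤ ·)) hmin
    exact ⟨n, hnN, .inl ⟨hx, Set.forall_mem_image.2 hle⟩⟩
  · obtain ⟨n, hnN, hx, hge⟩ := extremal_on (p := (· ≥ ·)) hmax
    exact ⟨n, hnN, .inr ⟨hx, Set.forall_mem_image.2 hge⟩⟩

theorem IsNetwork.lift_mk_range_le [PartialOrder α] (hN : IsNetwork N)
    (hf : ∀ x, IsLocalMin f x ∨ IsLocalMax f x) :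
    lift.{v} #(Set.range f) ≤ lift.{w} #(N × Bool) := by
  classical
  have key (t : Set.range f) : ∃ n : N, IsLeast (f '' n) t ∨ IsGreatest (f '' n) t := by
    obtain ⟨_, x, rfl⟩ := t
    obtain ⟨n, hnN, hn⟩ := hN.exists_isLeast_or_isGreatest hf x
    exact ⟨⟨n, hnN⟩, hn⟩
  choose n hn using key
  refine lift_mk_le'.2 ⟨⟨fun t => (n t, decide (IsLeast (f '' n t) t)), ?_⟩⟩
  intro t s hts
  obtain ⟨hnts, hdec⟩ := Prod.mk.inj hts
  rw [hnts, decide_eq_decide] at hdec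
  have ht := hnts ▸ hn t
  apply Subtype.ext
  by_cases hlt : IsLeast (f '' n s) t
  · exact hlt.unique (hdec.1 hlt)
  · exact (ht.resolve_left hlt).unique ((hn s).resolve_left (mt hdec.2 hlt))

end LocallyExtremal

theorem continuum_le_mk_range_of_continuous {X : Type*} [TopologicalSpace X] [ConnectedSpace X]
    {f : X → ℝ} (hcont : Continuous f) {p q : X} (hpq : f p ≠ f q) :
    𝔠 ≤ #(Set.range f) := by
  calc 𝔠 = #(Set.uIcc (f p) (f q)) := by rw [← Set.Icc_min_max, mk_Icc_real (min_lt_max.2 hpq)]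
    _ ≤ #(Set.range f) :=
      mk_le_mk_of_subset ((isPreconnected_range hcont).ordConnected.uIcc_subset ⟨p, rfl⟩ ⟨q, rfl⟩)

theorem Cardinal.le_of_aleph0_le_of_le_mul_two {a c : Cardinal} (hc : ℵ₀ ≤ c) (h : c ≤ a * 2) :
    c ≤ a := by
  have ha : ℵ₀ ≤ a := by
    by_contra! ha
    exact (mul_lt_aleph0 ha ofNat_lt_aleph0).not_ge (hc.trans h)
  rwa [mul_eq_left ha (ofNat_le_aleph0.trans ha) two_ne_zero] at h

/-- If a connected space admits a continuous non-constant locally extremal real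
function, then every network for it has cardinality at least `𝔠`;
i.e. `nw(X) ≥ 𝔠`. -/
theorem stmt_15 {X : Type u} [TopologicalSpace X] [ConnectedSpace X]
    (f : X → ℝ) (hcont : Continuous f)
    (hf : ∀ x : X, IsLocalMin f x ∨ IsLocalMax f x)
    (hnc : ¬ ∀ x y : X, f x = f y) :
    ∀ N : Set (Set X), IsNetwork N → Cardinal.continuum ≤ #N := by
  intro N hN
  push Not at hnc
  obtain ⟨p, q, hpq⟩ := hnc
  have hle : 𝔠 ≤ #N * 2 := by
    simpa using (lift_le.2 (continuum_le_mk_range_of_continuous hcont hpq)).trans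
      (hN.lift_mk_range_le hf)
  exact le_of_aleph0_le_of_le_mul_two aleph0_le_continuum hle
end
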